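/- Expanding a leaf labelled A ∈ {N, I} of a labelled binary tree into a caret (internal node with two new leaves) transforms the encoding word by replacing the single letter A with the three-letter factor 'N a I', where 'a' is the lowercase of 'A'. Conversely, contracting a caret both of whose children are leaves replaces a factor 'N a I' in the code by the single uppercase letter 'A'. -/

import Mathlib

/-- The alphabet `{n, N, i, I}` used to encode binary trees. -/
inductive Letter
  | n | N | i | I
deriving DecidableEq, Repr

/-- Uppercase letters are the leaf labels `N`, `I`. -/
def Letter.isUpper : Letter → Bool
  | .N => true
  | .I => true
  | _ => false

/-- Lowercase version of a letter. -/
def Letter.toLower : Letter → Letter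
  | .N => .n
  | .I => .i
  | x => x

/-- Full binary trees: every internal node (caret) has exactly two children. -/
inductive BTree
  | leaf
  | node (l r : BTree)
deriving DecidableEq, Repr

/-- Number of carets (internal nodes). -/
def BTree.carets : BTree → ℕ
  | .leaf => 0
  | .node l r => l.carets + r.carets + 1

/-- Number of leaves. -/
def BTree.numLeaves : BTree → ℕ
  | .leaf => 1
  | .node l r => l.numLeaves + r.numLeaves

/-- Encoding of a tree, reading labels left to right.  The boolean parameter
records whether the position of this subtree is of `N`-type (`true`) or
`I`-type (`false`): leaves get the corresponding uppercase letter, internal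
nodes the corresponding lowercase letter, with the left subtree of a caret in
`N`-position and the right subtree in `I`-position. -/
def enc : BTree → Bool → List Letter
  | .leaf, b => [if b then .N else .I]
  | .node l r, b => enc l true ++ [if b then .n else .i] ++ enc r false

/-- The encoding word with the leftmost-leaf label `N` prepended (the word
`ψ_k(t)` of length `2k+1`). -/
def fullcode (t : BTree) : List Letter := enc t true

/-- The encoding word of the paper: the leftmost leaf is not labelled, so the
word of a tree with `k` carets has length `2k`. -/
def code (t : BTree) : List Letter := (fullcode t).tail

/-- Expand the `j`-th leaf (in left-to-right order, counting from `0`) into a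
caret with two leaves. -/
def expand : BTree → ℕ → BTree
  | .leaf, 0 => .node .leaf .leaf
  | .leaf, _ + 1 => .leaf
  | .node l r, k =>
      if k < l.numLeaves then .node (expand l k) r
      else .node l (expand r (k - l.numLeaves))

theorem BTree.numLeaves_eq_carets_add_one (t : BTree) : t.numLeaves = t.carets + 1 := by
  induction t with
  | leaf => rfl
  | node l r ihl ihr => simp only [BTree.numLeaves, BTree.carets, ihl, ihr]; ring

theorem length_enc (t : BTree) (b : Bool) : (enc t b).length = 2 * t.carets + 1 := by
  induction t generalizing b with
  | leaf => rfl
  | node l r ihl ihr =>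
    simp only [enc, List.length_append, List.length_singleton, ihl, ihr, BTree.carets]
    ring

/- Leaves and carets alternate in `enc t b`, so the `j`-th leaf sits at position `2 * j`;
expanding it rewrites that one letter and leaves its context untouched. -/
theorem enc_eq_append_of_lt_numLeaves (t : BTree) (b : Bool) {j : ℕ} (hj : j < t.numLeaves) :
    ∃ u A v, u.length = 2 * j ∧ A.isUpper = true ∧ enc t b = u ++ A :: v ∧
      enc (expand t j) b = u ++ [Letter.N, A.toLower, Letter.I] ++ v := by
  induction t generalizing b j with
  | leaf =>
    obtain rfl : j = 0 := by simpa [BTree.numLeaves] using hj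
    refine ⟨[], if b then .N else .I, [], rfl, ?_, rfl, ?_⟩ <;> cases b <;> rfl
  | node l r ihl ihr =>
    by_cases hl : j < l.numLeaves
    · obtain ⟨u, A, v, hu, hA, henc, hexp⟩ := ihl true hl
      refine ⟨u, A, v ++ (if b then .n else .i) :: enc r false, hu, hA, ?_, ?_⟩
      · simp [enc, henc]
      · simp [expand, hl, enc, hexp]
    · obtain ⟨u, A, v, hu, hA, henc, hexp⟩ := ihr false (j := j - l.numLeaves) (by
        simp only [BTree.numLeaves] at hj; omega)
      refine ⟨enc l true ++ (if b then .n else .i) :: u, A, v, ?_, hA, ?_, ?_⟩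
      · simp only [BTree.numLeaves_eq_carets_add_one, not_lt, List.length_append, length_enc,
          List.length_cons, hu] at hl ⊢
        omega
      · simp [enc, henc]
      · simp [expand, hl, enc, hexp]

/-- Expanding a leaf labelled `A ∈ {N, I}` into a caret replaces the single
letter `A` in the encoding word by the three-letter factor `N a I`, where `a`
is the lowercase of `A`.  (Read backwards, contracting a caret whose children
are both leaves replaces the factor `N a I` by the single letter `A`.)  In the
word `fullcode t` (of length `2·carets + 1`) the `j`-th leaf sits at position
`2j`, and its label is an uppercase letter. -/
theorem fullcode_expand (t : BTree) (j : ℕ) (hj : j < t.numLeaves) :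
    ((fullcode t).getD (2 * j) Letter.N).isUpper = true ∧
    fullcode (expand t j) =
      (fullcode t).take (2 * j) ++
        [Letter.N, ((fullcode t).getD (2 * j) Letter.N).toLower, Letter.I] ++
        (fullcode t).drop (2 * j + 1) := by
  obtain ⟨u, A, v, hu, hA, henc, hexp⟩ := enc_eq_append_of_lt_numLeaves t true hj
  have hgetD : (fullcode t).getD (2 * j) Letter.N = A := by
    simp [fullcode, henc, ← hu]
  rw [hgetD]
  refine ⟨hA, ?_⟩
  simp [fullcode, henc, hexp, ← hu]
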